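/- arXiv:2408.03719 — 2 statements merged into one kernel-verified Lean document; each statement's English description precedes it below -/
import Mathlib

section
/- Let M = (E, 𝒞) be an oriented matroid with underlying matroid M̲ and let ≺ be any linear order on E. Then the number of subsets A ⊆ E such that the reorientation ₋ₐM is acyclic equals the number of NBC subsets of M̲; that is, |A(M)| = |NBC(M̲)|. -/
open Finset

/-- The support of a signed subset `X = (X⁺, X⁻)`. -/
def supp {α : Type} [DecidableEq α] (X : Finset α × Finset α) : Finset α := X.1 ∪ X.2

/-- An oriented matroid on ground set `α`, given by its collection of signed circuits,
satisfying the signed circuit axioms (C1)-(C4). -/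
structure OM (α : Type) [DecidableEq α] where
  C : Set (Finset α × Finset α)
  disj : ∀ X ∈ C, Disjoint X.1 X.2
  not_empty_mem : ((∅ : Finset α), (∅ : Finset α)) ∉ C
  neg_mem : ∀ X ∈ C, (X.2, X.1) ∈ C
  incomp : ∀ X ∈ C, ∀ Y ∈ C, supp X ⊆ supp Y → X = Y ∨ X = (Y.2, Y.1)
  elimAx : ∀ X ∈ C, ∀ Y ∈ C, X ≠ Y → X ≠ (Y.2, Y.1) → ∀ e ∈ X.1 ∩ Y.2,
    ∃ Z ∈ C, Z.1 ⊆ (X.1 ∪ Y.1).erase e ∧ Z.2 ⊆ (X.2 ∪ Y.2).erase e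

/-- A collection of signed subsets is acyclic if it contains no positive member. -/
def Acyclic {α : Type} (C : Set (Finset α × Finset α)) : Prop :=
  ∀ X ∈ C, X.2 ≠ ∅

/-- Reorientation of a signed subset by `A`. -/
def reorient {α : Type} [DecidableEq α] (A : Finset α) (X : Finset α × Finset α) :
    Finset α × Finset α :=
  ((X.1 \ A) ∪ (X.2 ∩ A), (X.2 \ A) ∪ (X.1 ∩ A))

/-- Reorientation of a collection of signed subsets by `A`. -/
def reorientC {α : Type} [DecidableEq α] (A : Finset α)
    (C : Set (Finset α × Finset α)) : Set (Finset α × Finset α) :=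
  reorient A '' C

/-- Deletion: keep the members whose support avoids `D`. -/
def delC {α : Type} [DecidableEq α] (D : Finset α)
    (C : Set (Finset α × Finset α)) : Set (Finset α × Finset α) :=
  {X ∈ C | Disjoint (supp X) D}

/-- The pre-circuits of the contraction by `T`. -/
def contrPre {α : Type} [DecidableEq α] (T : Finset α)
    (C : Set (Finset α × Finset α)) : Set (Finset α × Finset α) :=
  {Z | ∃ Y ∈ C, supp Y \ T ≠ ∅ ∧ Z = (Y.1 \ T, Y.2 \ T)}

/-- Contraction: the support-inclusion-minimal members of `contrPre T C`. -/
def contrC {α : Type} [DecidableEq α] (T : Finset α)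
    (C : Set (Finset α × Finset α)) : Set (Finset α × Finset α) :=
  {Z ∈ contrPre T C | ∀ W ∈ contrPre T C, supp W ⊆ supp Z → supp W = supp Z}

/-- `N` is an NBC subset of the underlying matroid of `M`: it contains no
broken circuit, i.e. no circuit of the underlying matroid with its maximal
element deleted. -/
def IsNBC {α : Type} [DecidableEq α] [LinearOrder α] (M : OM α) (N : Finset α) : Prop :=
  ∀ X ∈ M.C, ∀ h : (supp X).Nonempty, ¬ (supp X).erase ((supp X).max' h) ⊆ N

/-! ### Auxiliary development -/

open scoped Classical

section Aux

variable {α : Type} [DecidableEq α]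

/-- The axioms of an oriented matroid, for a raw circuit collection. -/
structure Ax (C : Set (Finset α × Finset α)) : Prop where
  disj : ∀ X ∈ C, Disjoint X.1 X.2
  not_empty_mem : ((∅ : Finset α), (∅ : Finset α)) ∉ C
  neg_mem : ∀ X ∈ C, (X.2, X.1) ∈ C
  incomp : ∀ X ∈ C, ∀ Y ∈ C, supp X ⊆ supp Y → X = Y ∨ X = (Y.2, Y.1)
  elimAx : ∀ X ∈ C, ∀ Y ∈ C, X ≠ Y → X ≠ (Y.2, Y.1) → ∀ e ∈ X.1 ∩ Y.2,
    ∃ Z ∈ C, Z.1 ⊆ (X.1 ∪ Y.1).erase e ∧ Z.2 ⊆ (X.2 ∪ Y.2).erase e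

def NotLoop (e : α) (C : Set (Finset α × Finset α)) : Prop :=
  ∀ X ∈ C, supp X ≠ ({e} : Finset α)

/-- The negative part after reorienting by `A`. -/
def rneg (A : Finset α) (X : Finset α × Finset α) : Finset α := (X.2 \ A) ∪ (X.1 ∩ A)

lemma mem_supp {a : α} {X : Finset α × Finset α} : a ∈ supp X ↔ a ∈ X.1 ∨ a ∈ X.2 :=
  Finset.mem_union

lemma mem_rneg {a : α} {A : Finset α} {X : Finset α × Finset α} :
    a ∈ rneg A X ↔ (a ∈ X.2 ∧ a ∉ A) ∨ (a ∈ X.1 ∧ a ∈ A) := by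
  simp [rneg, Finset.mem_union, Finset.mem_sdiff, Finset.mem_inter]

lemma supp_neg (X : Finset α × Finset α) : supp (X.2, X.1) = supp X := by
  simp [supp, Finset.union_comm]

lemma acyclic_reorientC_iff {A : Finset α} {C : Set (Finset α × Finset α)} :
    Acyclic (reorientC A C) ↔ ∀ X ∈ C, rneg A X ≠ ∅ := by
  constructor
  · intro h X hX
    exact h (reorient A X) ⟨X, hX, rfl⟩
  · rintro h Y ⟨X, hX, rfl⟩
    exact h X hX

lemma Ax.supp_ne_empty {C : Set (Finset α × Finset α)} (hC : Ax C)
    {X : Finset α × Finset α} (hX : X ∈ C) : supp X ≠ ∅ := by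
  intro h
  have h1 : X.1 = ∅ := by
    have := Finset.union_eq_empty.mp h
    exact this.1
  have h2 : X.2 = ∅ := (Finset.union_eq_empty.mp h).2
  apply hC.not_empty_mem
  have : X = ((∅ : Finset α), (∅ : Finset α)) := Prod.ext h1 h2
  rwa [this] at hX

lemma Ax.supp_nonempty {C : Set (Finset α × Finset α)} (hC : Ax C)
    {X : Finset α × Finset α} (hX : X ∈ C) : (supp X).Nonempty :=
  Finset.nonempty_iff_ne_empty.mpr (hC.supp_ne_empty hX)

end Aux

section Aux2

variable {α : Type} [DecidableEq α] {C : Set (Finset α × Finset α)}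

lemma Ax.elim' (hC : Ax C) {X Y : Finset α × Finset α} {f : α}
    (hX : X ∈ C) (hY : Y ∈ C) (hXY : X ≠ Y) (hXY' : X ≠ (Y.2, Y.1))
    (hf : (f ∈ X.1 ∧ f ∈ Y.2) ∨ (f ∈ X.2 ∧ f ∈ Y.1)) :
    ∃ Z ∈ C, Z.1 ⊆ (X.1 ∪ Y.1).erase f ∧ Z.2 ⊆ (X.2 ∪ Y.2).erase f := by
  rcases hf with ⟨h1, h2⟩ | ⟨h1, h2⟩
  · exact hC.elimAx X hX Y hY hXY hXY' f (Finset.mem_inter.mpr ⟨h1, h2⟩)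
  · have hX' : (X.2, X.1) ∈ C := hC.neg_mem X hX
    have hY' : (Y.2, Y.1) ∈ C := hC.neg_mem Y hY
    have hne1 : (X.2, X.1) ≠ (Y.2, Y.1) := by
      intro h; apply hXY
      have e1 : X.2 = Y.2 := congrArg Prod.fst h
      have e2 : X.1 = Y.1 := congrArg Prod.snd h
      exact Prod.ext e2 e1
    have hne2 : (X.2, X.1) ≠ (((Y.2, Y.1)).2, ((Y.2, Y.1)).1) := by
      intro h; apply hXY'
      have e1 : X.2 = Y.1 := congrArg Prod.fst h
      have e2 : X.1 = Y.2 := congrArg Prod.snd h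
      exact Prod.ext e2 e1
    obtain ⟨Z, hZ, hZ1, hZ2⟩ := hC.elimAx (X.2, X.1) hX' (Y.2, Y.1) hY' hne1 hne2 f
      (Finset.mem_inter.mpr ⟨h1, h2⟩)
    exact ⟨(Z.2, Z.1), hC.neg_mem Z hZ, hZ2, hZ1⟩

lemma rneg_subset_of_elim {A : Finset α} {X Y Z : Finset α × Finset α} {f : α}
    (h1 : Z.1 ⊆ (X.1 ∪ Y.1).erase f) (h2 : Z.2 ⊆ (X.2 ∪ Y.2).erase f) :
    rneg A Z ⊆ (rneg A X ∪ rneg A Y).erase f := by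
  intro a ha
  rw [mem_rneg] at ha
  simp only [Finset.mem_erase, Finset.mem_union, mem_rneg]
  rcases ha with ⟨ha2, haA⟩ | ⟨ha1, haA⟩
  · have := h2 ha2
    rw [Finset.mem_erase, Finset.mem_union] at this
    exact ⟨this.1, by tauto⟩
  · have := h1 ha1
    rw [Finset.mem_erase, Finset.mem_union] at this
    exact ⟨this.1, by tauto⟩

lemma supp_subset_of_elim {X Y Z : Finset α × Finset α} {f : α}
    (h1 : Z.1 ⊆ (X.1 ∪ Y.1).erase f) (h2 : Z.2 ⊆ (X.2 ∪ Y.2).erase f) :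
    supp Z ⊆ (supp X ∪ supp Y).erase f := by
  intro a ha
  rw [mem_supp] at ha
  simp only [Finset.mem_erase, Finset.mem_union, mem_supp]
  rcases ha with ha | ha
  · have := h1 ha
    rw [Finset.mem_erase, Finset.mem_union] at this
    exact ⟨this.1, by tauto⟩
  · have := h2 ha
    rw [Finset.mem_erase, Finset.mem_union] at this
    exact ⟨this.1, by tauto⟩

lemma rneg_subset_supp (A : Finset α) (X : Finset α × Finset α) : rneg A X ⊆ supp X := by
  intro a ha
  rw [mem_rneg] at ha
  rw [mem_supp]
  tauto

lemma supp_of_nonloop {e : α} (hC : Ax C) (hnl : NotLoop e C)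
    {X : Finset α × Finset α} (hX : X ∈ C) : (supp X \ {e}).Nonempty := by
  rw [Finset.sdiff_nonempty]
  intro hsub
  rcases Finset.subset_singleton_iff.mp hsub with h | h
  · exact hC.supp_ne_empty hX h
  · exact hnl X hX h

end Aux2
section KeyLemma

variable {α : Type} [DecidableEq α] {C : Set (Finset α × Finset α)} {e : α} {A : Finset α}

/-- Inner claim: given an "almost `A`-positive" circuit `X` (all reoriented-negative
elements are `e`) and any circuit `Y` whose support (off `e`) is strictly inside that
of `X`, we can find an almost `A`-positive circuit strictly inside `X`. -/
lemma inner_claim (hC : Ax C) (hnl : NotLoop e C) (he : e ∉ A)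
    {X : Finset α × Finset α} (hX : X ∈ C) (hAX : rneg A X ⊆ {e}) :
    ∀ m : ℕ, ∀ Y ∈ C, (rneg A Y \ {e}).card = m →
      supp Y \ {e} ⊂ supp X \ {e} →
      ∃ X' ∈ C, rneg A X' ⊆ {e} ∧ supp X' \ {e} ⊂ supp X \ {e} := by
  intro m
  induction m using Nat.strong_induction_on with
  | _ m IH =>
    intro Y hY hcard hYX
    by_cases hgood : rneg A Y ⊆ {e}
    · exact ⟨Y, hY, hgood, hYX⟩
    · -- pick f ∈ rneg A Y with f ≠ e
      obtain ⟨f, hf⟩ := Finset.not_subset.mp hgood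
      have hfY : f ∈ rneg A Y := hf.1
      have hfe : f ≠ e := by simpa using hf.2
      have hfsuppY : f ∈ supp Y := rneg_subset_supp A Y hfY
      have hfsuppX : f ∈ supp X \ {e} := by
        apply hYX.subset
        simp [Finset.mem_sdiff, hfsuppY, hfe]
      have hfX : f ∈ supp X := (Finset.mem_sdiff.mp hfsuppX).1
      have hfnX : f ∉ rneg A X := by
        intro h
        exact hfe (Finset.mem_singleton.mp (hAX h))
      -- determine signs of f in X and Y
      have hsign : (f ∈ X.1 ∧ f ∈ Y.2) ∨ (f ∈ X.2 ∧ f ∈ Y.1) := by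
        rw [mem_rneg] at hfY
        rw [mem_rneg] at hfnX
        rw [mem_supp] at hfX
        by_cases hfA : f ∈ A
        · right
          constructor
          · rcases hfX with h | h
            · exact absurd (Or.inr ⟨h, hfA⟩) hfnX
            · exact h
          · tauto
        · left
          constructor
          · rcases hfX with h | h
            · exact h
            · exact absurd (Or.inl ⟨h, hfA⟩) hfnX
          · tauto
      have hXne : X ≠ Y := by
        intro h; rw [h] at hYX; exact (lt_irrefl _ hYX)
      have hXne' : X ≠ (Y.2, Y.1) := by
        intro h
        have : supp X = supp Y := by rw [h]; exact supp_neg Y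
        rw [this] at hYX; exact (lt_irrefl _ hYX)
      obtain ⟨Z, hZ, hZ1, hZ2⟩ := hC.elim' hX hY hXne hXne' hsign
      have hrZ : rneg A Z ⊆ (rneg A X ∪ rneg A Y).erase f := rneg_subset_of_elim hZ1 hZ2
      have hsZ : supp Z ⊆ (supp X ∪ supp Y).erase f := supp_subset_of_elim hZ1 hZ2
      -- supp Z \ {e} ⊂ supp X \ {e}
      have hsuppYX : supp Y ⊆ supp X ∪ {e} := by
        intro a ha
        by_cases hae : a = e
        · simp [hae]
        · have : a ∈ supp X \ {e} := hYX.subset (by simp [Finset.mem_sdiff, ha, hae])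
          simp [Finset.mem_union, (Finset.mem_sdiff.mp this).1]
      have hsZX : supp Z \ {e} ⊂ supp X \ {e} := by
        constructor
        · intro a ha
          rw [Finset.mem_sdiff] at ha
          have h1 := hsZ ha.1
          rw [Finset.mem_erase, Finset.mem_union] at h1
          rw [Finset.mem_sdiff]
          refine ⟨?_, ha.2⟩
          rcases h1.2 with h | h
          · exact h
          · have := hsuppYX h
            rw [Finset.mem_union] at this
            rcases this with h' | h'
            · exact h'
            · exact absurd h' ha.2
        · intro hsub
          have : f ∈ supp Z \ {e} := hsub hfsuppX
          have h1 := hsZ (Finset.mem_sdiff.mp this).1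
          rw [Finset.mem_erase] at h1
          exact h1.1 rfl
      -- rneg A Z \ {e} strictly smaller than rneg A Y \ {e}
      have hrZY : rneg A Z \ {e} ⊆ (rneg A Y \ {e}).erase f := by
        intro a ha
        rw [Finset.mem_sdiff] at ha
        have h1 := hrZ ha.1
        rw [Finset.mem_erase, Finset.mem_union] at h1
        rw [Finset.mem_erase, Finset.mem_sdiff]
        refine ⟨h1.1, ?_, ha.2⟩
        rcases h1.2 with h | h
        · exact absurd (Finset.mem_singleton.mp (hAX h)) (by simpa using ha.2)
        · exact h
      have hfmem : f ∈ rneg A Y \ {e} := by simp [Finset.mem_sdiff, hfY, hfe]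
      have hcardlt : (rneg A Z \ {e}).card < m := by
        calc (rneg A Z \ {e}).card ≤ ((rneg A Y \ {e}).erase f).card := Finset.card_le_card hrZY
        _ < (rneg A Y \ {e}).card := Finset.card_erase_lt_of_mem hfmem
        _ = m := hcard
      exact IH _ hcardlt Z hZ rfl hsZX

/-- Key lemma: if `X ∈ C` is almost `A`-positive (`rneg A X ⊆ {e}`, `e ∉ A`), then
the contraction by `e` contains an `A`-positive circuit inside `supp X \ {e}`. -/
lemma lemmaL (hC : Ax C) (hnl : NotLoop e C) (he : e ∉ A) :
    ∀ n : ℕ, ∀ X ∈ C, (supp X \ {e}).card = n → rneg A X ⊆ {e} →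
      ∃ Z ∈ contrC {e} C, supp Z ⊆ supp X \ {e} ∧ rneg A Z = ∅ := by
  intro n
  induction n using Nat.strong_induction_on with
  | _ n IH =>
    intro X hX hcard hAX
    set Z₀ : Finset α × Finset α := (X.1 \ {e}, X.2 \ {e}) with hZ₀def
    have hsuppZ₀ : supp Z₀ = supp X \ {e} := by
      simp [supp, hZ₀def, Finset.union_sdiff_distrib]
    have hne : supp X \ {e} ≠ ∅ :=
      Finset.nonempty_iff_ne_empty.mp (supp_of_nonloop hC hnl hX)
    have hZ₀pre : Z₀ ∈ contrPre {e} C := ⟨X, hX, hne, rfl⟩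
    have hrZ₀ : rneg A Z₀ = ∅ := by
      rw [← Finset.subset_empty]
      intro a ha
      rw [mem_rneg] at ha
      have haX : a ∈ rneg A X := by
        rw [mem_rneg]
        simp only [hZ₀def, Finset.mem_sdiff, Finset.mem_singleton] at ha
        tauto
      have hae : a = e := Finset.mem_singleton.mp (hAX haX)
      exfalso
      simp only [hZ₀def, Finset.mem_sdiff, Finset.mem_singleton] at ha
      tauto
    by_cases hmin : Z₀ ∈ contrC {e} C
    · exact ⟨Z₀, hmin, hsuppZ₀.le, hrZ₀⟩
    · have : ∃ W ∈ contrPre {e} C, supp W ⊆ supp Z₀ ∧ supp W ≠ supp Z₀ := by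
        by_contra h
        push_neg at h
        exact hmin ⟨hZ₀pre, fun W hW hsub => h W hW hsub⟩
      obtain ⟨W, ⟨Y, hY, hYne, rfl⟩, hWsub, hWne⟩ := this
      have hsuppW : supp (Y.1 \ {e}, Y.2 \ {e}) = supp Y \ {e} := by
        simp [supp, Finset.union_sdiff_distrib]
      have hYX : supp Y \ {e} ⊂ supp X \ {e} := by
        rw [hsuppW, hsuppZ₀] at hWsub hWne
        exact lt_of_le_of_ne hWsub hWne
      obtain ⟨X', hX', hAX', hX'X⟩ :=
        inner_claim hC hnl he hX hAX (rneg A Y \ {e}).card Y hY rfl hYX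
      have hlt : (supp X' \ {e}).card < n := hcard ▸ Finset.card_lt_card hX'X
      obtain ⟨Z, hZ, hZsub, hZr⟩ := IH _ hlt X' hX' rfl hAX'
      exact ⟨Z, hZ, hZsub.trans hX'X.subset, hZr⟩

end KeyLemma
section Minors

variable {α : Type} [DecidableEq α] {C : Set (Finset α × Finset α)} {e : α}

lemma ax_del (hC : Ax C) : Ax (delC {e} C) := by
  constructor
  · exact fun X hX => hC.disj X hX.1
  · intro h; exact hC.not_empty_mem h.1
  · intro X hX
    exact ⟨hC.neg_mem X hX.1, by rw [supp_neg]; exact hX.2⟩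
  · intro X hX Y hY hsub
    exact hC.incomp X hX.1 Y hY.1 hsub
  · intro X hX Y hY h1 h2 f hf
    obtain ⟨Z, hZ, hZ1, hZ2⟩ := hC.elimAx X hX.1 Y hY.1 h1 h2 f hf
    refine ⟨Z, ⟨hZ, ?_⟩, hZ1, hZ2⟩
    have := supp_subset_of_elim hZ1 hZ2
    refine Finset.disjoint_left.mpr fun a ha hae => ?_
    have h3 := this ha
    rw [Finset.mem_erase, Finset.mem_union] at h3
    rcases h3.2 with h | h
    · exact Finset.disjoint_left.mp hX.2 h hae
    · exact Finset.disjoint_left.mp hY.2 h hae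

lemma supp_contr_pair (Y : Finset α × Finset α) :
    supp (Y.1 \ ({e} : Finset α), Y.2 \ ({e} : Finset α)) = supp Y \ {e} := by
  simp [supp, Finset.union_sdiff_distrib]

lemma contr_supp_nonempty {Z : Finset α × Finset α} (hZ : Z ∈ contrPre {e} C) :
    supp Z ≠ ∅ := by
  obtain ⟨Y, hY, hne, rfl⟩ := hZ
  rw [supp_contr_pair]; exact hne

/-- Extraction of a minimal member of the contraction below a given pre-member. -/
lemma contr_extract : ∀ n : ℕ, ∀ Z ∈ contrPre {e} C, (supp Z).card = n →
    ∃ W ∈ contrC {e} C, supp W ⊆ supp Z := by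
  intro n
  induction n using Nat.strong_induction_on with
  | _ n IH =>
    intro Z hZ hcard
    by_cases hmin : Z ∈ contrC {e} C
    · exact ⟨Z, hmin, le_refl _⟩
    · have : ∃ W ∈ contrPre {e} C, supp W ⊆ supp Z ∧ supp W ≠ supp Z := by
        by_contra h
        push_neg at h
        exact hmin ⟨hZ, fun W hW hsub => h W hW hsub⟩
      obtain ⟨W, hW, hsub, hne⟩ := this
      have hlt : (supp W).card < n := hcard ▸ Finset.card_lt_card (lt_of_le_of_ne hsub hne)
      obtain ⟨V, hV, hVsub⟩ := IH _ hlt W hW rfl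
      exact ⟨V, hV, hVsub.trans hsub⟩

lemma ax_contr (hC : Ax C) (hnl : NotLoop e C) : Ax (contrC {e} C) := by
  constructor
  · rintro Z ⟨⟨Y, hY, hne, rfl⟩, -⟩
    exact Finset.disjoint_of_subset_left (Finset.sdiff_subset)
      (Finset.disjoint_of_subset_right (Finset.sdiff_subset) (hC.disj Y hY))
  · rintro ⟨hpre, -⟩
    exact contr_supp_nonempty hpre (by simp [supp])
  · rintro Z ⟨⟨Y, hY, hne, rfl⟩, hmin⟩
    refine ⟨⟨(Y.2, Y.1), hC.neg_mem Y hY, by rwa [supp_neg], rfl⟩, ?_⟩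
    intro W hW hsub
    rw [supp_neg (Y.1 \ {e}, Y.2 \ {e})] at hsub ⊢
    exact hmin W hW hsub
  · -- incomparability
    rintro Z hZC W hWC hsub
    obtain ⟨⟨Y₁, hY₁, hne₁, rfl⟩, hmin₁⟩ := hZC
    obtain ⟨⟨Y₂, hY₂, hne₂, rfl⟩, hmin₂⟩ := hWC
    set Z := (Y₁.1 \ ({e} : Finset α), Y₁.2 \ ({e} : Finset α)) with hZdef
    set W := (Y₂.1 \ ({e} : Finset α), Y₂.2 \ ({e} : Finset α)) with hWdef
    have hsupp_eq : supp Z = supp W := hmin₂ Z ⟨Y₁, hY₁, hne₁, rfl⟩ hsub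
    by_cases heY₁ : e ∈ supp Y₁
    · by_cases heY₂ : e ∈ supp Y₂
      · -- both contain e
        rcases eq_or_ne Z W with h | hZW
        · exact Or.inl h
        rcases eq_or_ne Z (W.2, W.1) with h | hZW'
        · exact Or.inr h
        exfalso
        -- find f with opposite signs in Z and W
        have hsign : ∃ f, (f ∈ Z.1 ∧ f ∈ W.2) ∨ (f ∈ Z.2 ∧ f ∈ W.1) := by
          have h1 : Z.1 ≠ W.1 ∨ Z.2 ≠ W.2 := by
            by_contra h
            push_neg at h
            exact hZW (Prod.ext h.1 h.2)
          have hsupp : ∀ a, a ∈ supp Z ↔ a ∈ supp W := fun a =>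
            ⟨fun h => hsupp_eq ▸ h, fun h => hsupp_eq.symm ▸ h⟩
          have hdisjZ : Disjoint Z.1 Z.2 := Finset.disjoint_of_subset_left Finset.sdiff_subset
            (Finset.disjoint_of_subset_right Finset.sdiff_subset (hC.disj Y₁ hY₁))
          have hdisjW : Disjoint W.1 W.2 := Finset.disjoint_of_subset_left Finset.sdiff_subset
            (Finset.disjoint_of_subset_right Finset.sdiff_subset (hC.disj Y₂ hY₂))
          rcases h1 with h | h
          · obtain ⟨f, hf⟩ : ∃ f, (f ∈ Z.1 ∧ f ∉ W.1) ∨ (f ∈ W.1 ∧ f ∉ Z.1) := by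
              by_contra hc
              push_neg at hc
              exact h (Finset.ext fun a => ⟨(hc a).1, (hc a).2⟩)
            rcases hf with ⟨hf1, hf2⟩ | ⟨hf1, hf2⟩
            · refine ⟨f, Or.inl ⟨hf1, ?_⟩⟩
              have : f ∈ supp W := (hsupp f).mp (by rw [mem_supp]; exact Or.inl hf1)
              rw [mem_supp] at this; tauto
            · refine ⟨f, Or.inr ⟨?_, hf1⟩⟩
              have : f ∈ supp Z := (hsupp f).mpr (by rw [mem_supp]; exact Or.inl hf1)
              rw [mem_supp] at this; tauto
          · obtain ⟨f, hf⟩ : ∃ f, (f ∈ Z.2 ∧ f ∉ W.2) ∨ (f ∈ W.2 ∧ f ∉ Z.2) := by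
              by_contra hc
              push_neg at hc
              exact h (Finset.ext fun a => ⟨(hc a).1, (hc a).2⟩)
            rcases hf with ⟨hf1, hf2⟩ | ⟨hf1, hf2⟩
            · refine ⟨f, Or.inr ⟨hf1, ?_⟩⟩
              have : f ∈ supp W := (hsupp f).mp (by rw [mem_supp]; exact Or.inr hf1)
              rw [mem_supp] at this; tauto
            · refine ⟨f, Or.inl ⟨?_, hf1⟩⟩
              have : f ∈ supp Z := (hsupp f).mpr (by rw [mem_supp]; exact Or.inr hf1)
              rw [mem_supp] at this; tauto
        obtain ⟨f, hf⟩ := hsign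
        have hfe : f ≠ e := by
          rcases hf with ⟨h1, -⟩ | ⟨h1, -⟩ <;>
            · simp only [hZdef, Finset.mem_sdiff, Finset.mem_singleton] at h1
              exact h1.2
        have hfsign : (f ∈ Y₁.1 ∧ f ∈ Y₂.2) ∨ (f ∈ Y₁.2 ∧ f ∈ Y₂.1) := by
          rcases hf with ⟨h1, h2⟩ | ⟨h1, h2⟩
          · simp only [hZdef, hWdef, Finset.mem_sdiff] at h1 h2
            exact Or.inl ⟨h1.1, h2.1⟩
          · simp only [hZdef, hWdef, Finset.mem_sdiff] at h1 h2
            exact Or.inr ⟨h1.1, h2.1⟩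
        have hY₁₂ : Y₁ ≠ Y₂ := by
          rintro rfl; exact hZW rfl
        have hY₁₂' : Y₁ ≠ (Y₂.2, Y₂.1) := by
          rintro rfl; exact hZW' rfl
        obtain ⟨V, hV, hV1, hV2⟩ := hC.elim' hY₁ hY₂ hY₁₂ hY₁₂' hfsign
        have hsV : supp V ⊆ (supp Y₁ ∪ supp Y₂).erase f := supp_subset_of_elim hV1 hV2
        have hfZ : f ∈ supp Z := by
          rw [mem_supp]
          rcases hf with ⟨h, -⟩ | ⟨h, -⟩
          · exact Or.inl h
          · exact Or.inr h
        have hVp : (V.1 \ ({e} : Finset α), V.2 \ ({e} : Finset α)) ∈ contrPre {e} C := by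
          refine ⟨V, hV, ?_, rfl⟩
          exact Finset.nonempty_iff_ne_empty.mp (supp_of_nonloop hC hnl hV)
        have hVZ : supp (V.1 \ ({e} : Finset α), V.2 \ ({e} : Finset α)) ⊆ supp Z := by
          rw [supp_contr_pair]
          intro a ha
          rw [Finset.mem_sdiff] at ha
          have h1 := hsV ha.1
          rw [Finset.mem_erase, Finset.mem_union] at h1
          rcases h1.2 with h | h
          · have : a ∈ supp Y₁ \ {e} := Finset.mem_sdiff.mpr ⟨h, ha.2⟩
            rwa [← supp_contr_pair Y₁] at this
          · have : a ∈ supp Y₂ \ {e} := Finset.mem_sdiff.mpr ⟨h, ha.2⟩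
            rw [← supp_contr_pair Y₂] at this
            rw [hsupp_eq]; exact this
        have := hmin₁ _ hVp hVZ
        -- but f ∈ supp Z and f ∉ supp V
        have hfV : f ∉ supp (V.1 \ ({e} : Finset α), V.2 \ ({e} : Finset α)) := by
          rw [supp_contr_pair]
          intro h
          have := hsV (Finset.mem_sdiff.mp h).1
          rw [Finset.mem_erase] at this
          exact this.1 rfl
        rw [this] at hfV
        exact hfV hfZ
      · -- e ∈ supp Y₁ but e ∉ supp Y₂ : contradiction via incomp of C
        exfalso
        have hW : supp W = supp Y₂ := by
          rw [hWdef, supp_contr_pair]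
          rw [Finset.sdiff_eq_self_of_disjoint (Finset.disjoint_singleton_right.mpr heY₂)]
        have h1 : supp Y₂ ⊆ supp Y₁ := by
          rw [← hW, ← hsupp_eq, hZdef, supp_contr_pair]
          exact (Finset.sdiff_subset).trans (le_refl _)
        rcases hC.incomp Y₂ hY₂ Y₁ hY₁ h1 with h | h
        · rw [h] at heY₂; exact heY₂ heY₁
        · rw [h, supp_neg] at heY₂; exact heY₂ heY₁
    · by_cases heY₂ : e ∈ supp Y₂
      · exfalso
        have hZs : supp Z = supp Y₁ := by
          rw [hZdef, supp_contr_pair]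
          rw [Finset.sdiff_eq_self_of_disjoint (Finset.disjoint_singleton_right.mpr heY₁)]
        have h1 : supp Y₁ ⊆ supp Y₂ := by
          rw [← hZs, hsupp_eq, hWdef, supp_contr_pair]
          exact Finset.sdiff_subset
        rcases hC.incomp Y₁ hY₁ Y₂ hY₂ h1 with h | h
        · rw [h] at heY₁; exact heY₁ heY₂
        · rw [h, supp_neg] at heY₁; exact heY₁ heY₂
      · -- neither contains e : Z = Y₁, W = Y₂
        have hZY : Z = Y₁ := by
          rw [hZdef]
          have h1 : Y₁.1 \ ({e} : Finset α) = Y₁.1 := Finset.sdiff_eq_self_of_disjoint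
            (Finset.disjoint_singleton_right.mpr fun h => heY₁ (mem_supp.mpr (Or.inl h)))
          have h2 : Y₁.2 \ ({e} : Finset α) = Y₁.2 := Finset.sdiff_eq_self_of_disjoint
            (Finset.disjoint_singleton_right.mpr fun h => heY₁ (mem_supp.mpr (Or.inr h)))
          rw [h1, h2]
        have hWY : W = Y₂ := by
          rw [hWdef]
          have h1 : Y₂.1 \ ({e} : Finset α) = Y₂.1 := Finset.sdiff_eq_self_of_disjoint
            (Finset.disjoint_singleton_right.mpr fun h => heY₂ (mem_supp.mpr (Or.inl h)))
          have h2 : Y₂.2 \ ({e} : Finset α) = Y₂.2 := Finset.sdiff_eq_self_of_disjoint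
            (Finset.disjoint_singleton_right.mpr fun h => heY₂ (mem_supp.mpr (Or.inr h)))
          rw [h1, h2]
        rw [hZY, hWY]
        rw [hZY, hWY] at hsub
        exact hC.incomp Y₁ hY₁ Y₂ hY₂ hsub
  · -- elimination
    rintro Z hZC W hWC hZW hZW' f hf
    obtain ⟨⟨Y₁, hY₁, hne₁, hZdef⟩, hmin₁⟩ := hZC
    obtain ⟨⟨Y₂, hY₂, hne₂, hWdef⟩, hmin₂⟩ := hWC
    rw [Finset.mem_inter] at hf
    have hfe : f ≠ e := by
      have := hf.1
      rw [hZdef] at this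
      simp only [Finset.mem_sdiff, Finset.mem_singleton] at this
      exact this.2
    have hfsign : (f ∈ Y₁.1 ∧ f ∈ Y₂.2) ∨ (f ∈ Y₁.2 ∧ f ∈ Y₂.1) := by
      left
      constructor
      · have := hf.1; rw [hZdef] at this
        exact (Finset.mem_sdiff.mp this).1
      · have := hf.2; rw [hWdef] at this
        exact (Finset.mem_sdiff.mp this).1
    have hY₁₂ : Y₁ ≠ Y₂ := by
      rintro rfl; exact hZW (hZdef.trans hWdef.symm)
    have hY₁₂' : Y₁ ≠ (Y₂.2, Y₂.1) := by
      rintro rfl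
      apply hZW'
      rw [hZdef, hWdef]
    obtain ⟨V, hV, hV1, hV2⟩ := hC.elim' hY₁ hY₂ hY₁₂ hY₁₂' hfsign
    -- apply the key lemma with A := V.2 \ {e}
    set A : Finset α := V.2 \ {e} with hAdef
    have heA : e ∉ A := by simp [hAdef]
    have hrV : rneg A V ⊆ {e} := by
      intro a ha
      rw [mem_rneg] at ha
      rcases ha with ⟨h1, h2⟩ | ⟨h1, h2⟩
      · rw [Finset.mem_singleton]
        by_contra hae
        exact h2 (by simp [hAdef, Finset.mem_sdiff, h1, hae])
      · exfalso
        rw [hAdef, Finset.mem_sdiff] at h2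
        exact Finset.disjoint_left.mp (hC.disj V hV) h1 h2.1
    obtain ⟨U, hU, hUsub, hUr⟩ := lemmaL hC hnl heA (supp V \ {e}).card V hV rfl hrV
    refine ⟨U, hU, ?_, ?_⟩
    · -- U.1 ⊆ (Z.1 ∪ W.1).erase f
      intro a ha
      have haU : a ∈ supp U := mem_supp.mpr (Or.inl ha)
      have haV : a ∈ supp V \ {e} := hUsub haU
      rw [Finset.mem_sdiff, Finset.mem_singleton] at haV
      have haV1 : a ∈ V.1 := by
        rcases mem_supp.mp haV.1 with h | h
        · exact h
        · exfalso
          have : a ∈ A := by rw [hAdef, Finset.mem_sdiff, Finset.mem_singleton]; exact ⟨h, haV.2⟩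
          have : a ∈ rneg A U := mem_rneg.mpr (Or.inr ⟨ha, this⟩)
          rw [hUr] at this
          exact absurd this (Finset.notMem_empty a)
      have := hV1 haV1
      rw [Finset.mem_erase, Finset.mem_union] at this
      rw [Finset.mem_erase, Finset.mem_union]
      refine ⟨this.1, ?_⟩
      rcases this.2 with h | h
      · left; rw [hZdef]; exact Finset.mem_sdiff.mpr ⟨h, by simpa using haV.2⟩
      · right; rw [hWdef]; exact Finset.mem_sdiff.mpr ⟨h, by simpa using haV.2⟩
    · -- U.2 ⊆ (Z.2 ∪ W.2).erase f
      intro a ha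
      have haU : a ∈ supp U := mem_supp.mpr (Or.inr ha)
      have haV : a ∈ supp V \ {e} := hUsub haU
      rw [Finset.mem_sdiff, Finset.mem_singleton] at haV
      have haV2 : a ∈ V.2 := by
        have haA : a ∈ A := by
          by_contra hc
          have : a ∈ rneg A U := mem_rneg.mpr (Or.inl ⟨ha, hc⟩)
          rw [hUr] at this
          exact absurd this (Finset.notMem_empty a)
        rw [hAdef, Finset.mem_sdiff] at haA
        exact haA.1
      have := hV2 haV2
      rw [Finset.mem_erase, Finset.mem_union] at this
      rw [Finset.mem_erase, Finset.mem_union]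
      refine ⟨this.1, ?_⟩
      rcases this.2 with h | h
      · left; rw [hZdef]; exact Finset.mem_sdiff.mpr ⟨h, by simpa using haV.2⟩
      · right; rw [hWdef]; exact Finset.mem_sdiff.mpr ⟨h, by simpa using haV.2⟩

end Minors
section AcySide

variable {α : Type} [DecidableEq α] {C : Set (Finset α × Finset α)} {e : α} {A : Finset α}

lemma acy_del_of_acy (h : Acyclic (reorientC A C)) : Acyclic (reorientC A (delC {e} C)) := by
  rw [acyclic_reorientC_iff] at h ⊢
  exact fun X hX => h X hX.1

lemma rneg_eq_of_notMem_supp (h : e ∉ supp X) : rneg (insert e A) X = rneg A X := by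
  ext a
  rw [mem_rneg, mem_rneg]
  have h1 : e ∉ X.1 := fun hh => h (mem_supp.mpr (Or.inl hh))
  have h2 : e ∉ X.2 := fun hh => h (mem_supp.mpr (Or.inr hh))
  constructor
  · rintro (⟨ha, hA⟩ | ⟨ha, hA⟩)
    · exact Or.inl ⟨ha, fun hc => hA (Finset.mem_insert_of_mem hc)⟩
    · rcases Finset.mem_insert.mp hA with rfl | hA
      · exact absurd ha h1
      · exact Or.inr ⟨ha, hA⟩
  · rintro (⟨ha, hA⟩ | ⟨ha, hA⟩)
    · refine Or.inl ⟨ha, fun hc => ?_⟩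
      rcases Finset.mem_insert.mp hc with rfl | hc
      · exact h2 ha
      · exact hA hc
    · exact Or.inr ⟨ha, Finset.mem_insert_of_mem hA⟩

lemma acy_del_of_acy_insert (h : Acyclic (reorientC (insert e A) C)) :
    Acyclic (reorientC A (delC {e} C)) := by
  rw [acyclic_reorientC_iff] at h ⊢
  intro X hX
  have heX : e ∉ supp X := Finset.disjoint_singleton_right.mp hX.2
  rw [← rneg_eq_of_notMem_supp (A := A) heX]
  exact h X hX.1

lemma acy_or_acy_insert (hC : Ax C) (hnl : NotLoop e C) (he : e ∉ A)
    (hd : Acyclic (reorientC A (delC {e} C))) :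
    Acyclic (reorientC A C) ∨ Acyclic (reorientC (insert e A) C) := by
  by_contra hcon
  push_neg at hcon
  obtain ⟨h1, h2⟩ := hcon
  rw [acyclic_reorientC_iff] at h1 h2 hd
  push_neg at h1 h2
  obtain ⟨X, hX, hXr⟩ := h1
  obtain ⟨Y, hY, hYr⟩ := h2
  -- facts about X
  have hX2A : X.2 ⊆ A := by
    intro a ha
    by_contra hc
    have : a ∈ rneg A X := mem_rneg.mpr (Or.inl ⟨ha, hc⟩)
    rw [hXr] at this; exact absurd this (Finset.notMem_empty a)
  have hX1A : ∀ a ∈ X.1, a ∉ A := by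
    intro a ha hc
    have : a ∈ rneg A X := mem_rneg.mpr (Or.inr ⟨ha, hc⟩)
    rw [hXr] at this; exact absurd this (Finset.notMem_empty a)
  have hY2A : Y.2 ⊆ insert e A := by
    intro a ha
    by_contra hc
    have : a ∈ rneg (insert e A) Y := mem_rneg.mpr (Or.inl ⟨ha, hc⟩)
    rw [hYr] at this; exact absurd this (Finset.notMem_empty a)
  have hY1A : ∀ a ∈ Y.1, a ∉ insert e A := by
    intro a ha hc
    have : a ∈ rneg (insert e A) Y := mem_rneg.mpr (Or.inr ⟨ha, hc⟩)
    rw [hYr] at this; exact absurd this (Finset.notMem_empty a)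
  -- e must be in supp X (in X.1) and in supp Y (in Y.2)
  have heX : e ∈ X.1 := by
    by_cases hs : e ∈ supp X
    · rcases mem_supp.mp hs with h | h
      · exact h
      · exact absurd (hX2A h) he
    · exfalso
      exact hd X ⟨hX, Finset.disjoint_singleton_right.mpr hs⟩ hXr
  have heY : e ∈ Y.2 := by
    by_cases hs : e ∈ supp Y
    · rcases mem_supp.mp hs with h | h
      · exact absurd (Finset.mem_insert_self e A) (hY1A e h)
      · exact h
    · exfalso
      apply hd Y ⟨hY, Finset.disjoint_singleton_right.mpr hs⟩
      rw [← rneg_eq_of_notMem_supp (A := A) hs]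
      exact hYr
  -- eliminate at e
  have hXYne : X ≠ Y := by
    rintro rfl
    exact Finset.disjoint_left.mp (hC.disj X hX) heX heY
  have hXYne' : X ≠ (Y.2, Y.1) := by
    intro h
    have hX1 : X.1 = Y.2 := congrArg Prod.fst h
    have hX2 : X.2 = Y.1 := congrArg Prod.snd h
    -- X.1 ⊆ {e} and X.2 = ∅, contradicting NotLoop
    have hX1sub : X.1 ⊆ {e} := by
      intro a ha
      rw [Finset.mem_singleton]
      by_contra hae
      have haA : a ∈ insert e A := hY2A (hX1 ▸ ha)
      rcases Finset.mem_insert.mp haA with h' | h'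
      · exact hae h'
      · exact hX1A a ha h'
    have hX2emp : X.2 = ∅ := by
      rw [Finset.eq_empty_iff_forall_notMem]
      intro a ha
      exact hY1A a (hX2 ▸ ha) (Finset.mem_insert_of_mem (hX2A ha))
    apply hnl X hX
    apply Finset.Subset.antisymm
    · rw [supp, hX2emp, Finset.union_empty]; exact hX1sub
    · intro a ha
      rw [Finset.mem_singleton] at ha
      subst ha
      exact mem_supp.mpr (Or.inl heX)
  obtain ⟨Z, hZ, hZ1, hZ2⟩ := hC.elimAx X hX Y hY hXYne hXYne' e (Finset.mem_inter.mpr ⟨heX, heY⟩)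
  have hsZ := supp_subset_of_elim hZ1 hZ2
  have hZdel : Z ∈ delC {e} C := by
    refine ⟨hZ, Finset.disjoint_singleton_right.mpr fun h => ?_⟩
    have := hsZ h
    rw [Finset.mem_erase] at this
    exact this.1 rfl
  apply hd Z hZdel
  rw [Finset.eq_empty_iff_forall_notMem]
  intro a ha
  rcases mem_rneg.mp ha with ⟨ha2, haA⟩ | ⟨ha1, haA⟩
  · have := hZ2 ha2
    rw [Finset.mem_erase, Finset.mem_union] at this
    rcases this.2 with h | h
    · exact haA (hX2A h)
    · rcases Finset.mem_insert.mp (hY2A h) with h' | h'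
      · exact this.1 h'
      · exact haA h'
  · have := hZ1 ha1
    rw [Finset.mem_erase, Finset.mem_union] at this
    rcases this.2 with h | h
    · exact hX1A a h haA
    · exact hY1A a h (Finset.mem_insert_of_mem haA)

lemma not_acy_contr_of_not_acy (hC : Ax C) (hnl : NotLoop e C) (he : e ∉ A)
    (h : ¬ Acyclic (reorientC A C)) : ¬ Acyclic (reorientC A (contrC {e} C)) := by
  rw [acyclic_reorientC_iff] at h ⊢
  push_neg at h ⊢
  obtain ⟨X, hX, hXr⟩ := h
  have hsub : rneg A X ⊆ {e} := by rw [hXr]; exact Finset.empty_subset _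
  obtain ⟨Z, hZ, -, hZr⟩ := lemmaL hC hnl he (supp X \ {e}).card X hX rfl hsub
  exact ⟨Z, hZ, hZr⟩

lemma not_acy_contr_of_not_acy_insert (hC : Ax C) (hnl : NotLoop e C) (he : e ∉ A)
    (h : ¬ Acyclic (reorientC (insert e A) C)) : ¬ Acyclic (reorientC A (contrC {e} C)) := by
  rw [acyclic_reorientC_iff] at h ⊢
  push_neg at h ⊢
  obtain ⟨X, hX, hXr⟩ := h
  have h2 : X.2 ⊆ insert e A := by
    intro a ha
    by_contra hc
    have : a ∈ rneg (insert e A) X := mem_rneg.mpr (Or.inl ⟨ha, hc⟩)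
    rw [hXr] at this; exact absurd this (Finset.notMem_empty a)
  have h1 : ∀ a ∈ X.1, a ∉ insert e A := by
    intro a ha hc
    have : a ∈ rneg (insert e A) X := mem_rneg.mpr (Or.inr ⟨ha, hc⟩)
    rw [hXr] at this; exact absurd this (Finset.notMem_empty a)
  have hsub : rneg A X ⊆ {e} := by
    intro a ha
    rw [Finset.mem_singleton]
    rcases mem_rneg.mp ha with ⟨ha2, haA⟩ | ⟨ha1, haA⟩
    · rcases Finset.mem_insert.mp (h2 ha2) with h' | h'
      · exact h'
      · exact absurd h' haA
    · exact absurd (Finset.mem_insert_of_mem haA) (h1 a ha1)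
  obtain ⟨Z, hZ, -, hZr⟩ := lemmaL hC hnl he (supp X \ {e}).card X hX rfl hsub
  exact ⟨Z, hZ, hZr⟩

lemma not_acy_of_not_acy_contr (hC : Ax C) (he : e ∉ A)
    (h : ¬ Acyclic (reorientC A (contrC {e} C))) :
    ¬ Acyclic (reorientC A C) ∨ ¬ Acyclic (reorientC (insert e A) C) := by
  rw [acyclic_reorientC_iff] at h
  push_neg at h
  obtain ⟨Z, hZ, hZr⟩ := h
  obtain ⟨⟨Y, hY, hne, rfl⟩, -⟩ := hZ
  have h2 : Y.2 \ {e} ⊆ A := by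
    intro a ha
    by_contra hc
    have : a ∈ rneg A (Y.1 \ {e}, Y.2 \ {e}) := mem_rneg.mpr (Or.inl ⟨ha, hc⟩)
    rw [hZr] at this; exact absurd this (Finset.notMem_empty a)
  have h1 : ∀ a ∈ Y.1 \ ({e} : Finset α), a ∉ A := by
    intro a ha hc
    have : a ∈ rneg A (Y.1 \ {e}, Y.2 \ {e}) := mem_rneg.mpr (Or.inr ⟨ha, hc⟩)
    rw [hZr] at this; exact absurd this (Finset.notMem_empty a)
  by_cases heY : e ∈ Y.2
  · right
    rw [acyclic_reorientC_iff]
    push_neg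
    refine ⟨Y, hY, ?_⟩
    rw [Finset.eq_empty_iff_forall_notMem]
    intro a ha
    rcases mem_rneg.mp ha with ⟨ha2, haA⟩ | ⟨ha1, haA⟩
    · apply haA
      by_cases hae : a = e
      · exact hae ▸ Finset.mem_insert_self e A
      · exact Finset.mem_insert_of_mem (h2 (Finset.mem_sdiff.mpr ⟨ha2, by simpa using hae⟩))
    · have hae : a ≠ e := by
        rintro rfl
        exact Finset.disjoint_left.mp (hC.disj Y hY) ha1 heY
      rcases Finset.mem_insert.mp haA with h' | h'
      · exact hae h'
      · exact h1 a (Finset.mem_sdiff.mpr ⟨ha1, by simpa using hae⟩) h'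
  · left
    rw [acyclic_reorientC_iff]
    push_neg
    refine ⟨Y, hY, ?_⟩
    rw [Finset.eq_empty_iff_forall_notMem]
    intro a ha
    rcases mem_rneg.mp ha with ⟨ha2, haA⟩ | ⟨ha1, haA⟩
    · have hae : a ≠ e := fun hc => heY (hc ▸ ha2)
      exact haA (h2 (Finset.mem_sdiff.mpr ⟨ha2, by simpa using hae⟩))
    · have hae : a ≠ e := fun hc => he (hc ▸ haA)
      exact h1 a (Finset.mem_sdiff.mpr ⟨ha1, by simpa using hae⟩) haA

lemma acy_pointwise (hC : Ax C) (hnl : NotLoop e C) (he : e ∉ A) :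
    ((if Acyclic (reorientC A C) then 1 else 0)
      + (if Acyclic (reorientC (insert e A) C) then 1 else 0) : ℕ)
    = (if Acyclic (reorientC A (delC {e} C)) then 1 else 0)
      + (if Acyclic (reorientC A (contrC {e} C)) then 1 else 0) := by
  by_cases hc : Acyclic (reorientC A (contrC {e} C))
  · have hA : Acyclic (reorientC A C) := by
      by_contra h; exact not_acy_contr_of_not_acy hC hnl he h hc
    have hI : Acyclic (reorientC (insert e A) C) := by
      by_contra h; exact not_acy_contr_of_not_acy_insert hC hnl he h hc
    simp [hA, hI, hc, acy_del_of_acy hA]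
  · by_cases hd : Acyclic (reorientC A (delC {e} C))
    · rcases not_acy_of_not_acy_contr hC he hc with hnA | hnI
      · have hI : Acyclic (reorientC (insert e A) C) :=
          (acy_or_acy_insert hC hnl he hd).resolve_left hnA
        simp [hnA, hI, hc, hd]
      · have hA : Acyclic (reorientC A C) :=
          (acy_or_acy_insert hC hnl he hd).resolve_right hnI
        simp [hA, hnI, hc, hd]
    · have hnA : ¬ Acyclic (reorientC A C) := fun h => hd (acy_del_of_acy h)
      have hnI : ¬ Acyclic (reorientC (insert e A) C) := fun h => hd (acy_del_of_acy_insert h)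
      simp [hnA, hnI, hc, hd]

end AcySide
section Counting

variable {α : Type} [DecidableEq α]

lemma count_split {E : Finset α} {e : α} (he : e ∈ E) (Q : Finset α → Prop) :
    ((E.powerset).filter (fun A => Q A)).card
      = (((E.erase e).powerset).filter (fun A => Q A)).card
        + (((E.erase e).powerset).filter (fun A => Q (insert e A))).card := by
  have hsplit := Finset.card_filter_add_card_filter_not
    (s := E.powerset.filter (fun A => Q A)) (p := fun A => e ∉ A)
  rw [Finset.filter_filter, Finset.filter_filter] at hsplit
  have h1 : (E.powerset.filter (fun A => Q A ∧ e ∉ A))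
      = ((E.erase e).powerset).filter (fun A => Q A) := by
    ext A
    simp only [Finset.mem_filter, Finset.mem_powerset, Finset.subset_erase]
    tauto
  have h2 : (E.powerset.filter (fun A => Q A ∧ ¬ e ∉ A)).card
      = (((E.erase e).powerset).filter (fun A => Q (insert e A))).card := by
    apply Finset.card_bij (fun A _ => A.erase e)
    · intro A hA
      rw [Finset.mem_filter, Finset.mem_powerset] at hA
      obtain ⟨hAE, hQA, heA⟩ := hA
      rw [not_not] at heA
      rw [Finset.mem_filter, Finset.mem_powerset]
      refine ⟨Finset.erase_subset_erase e hAE, ?_⟩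
      rwa [Finset.insert_erase heA]
    · intro A hA A' hA' hEq
      rw [Finset.mem_filter] at hA hA'
      rw [not_not] at hA hA'
      rw [← Finset.insert_erase hA.2.2, ← Finset.insert_erase hA'.2.2, hEq]
    · intro B hB
      rw [Finset.mem_filter, Finset.mem_powerset] at hB
      have heB : e ∉ B := fun h => (Finset.mem_erase.mp (hB.1 h)).1 rfl
      refine ⟨insert e B, ?_, ?_⟩
      · rw [Finset.mem_filter, Finset.mem_powerset]
        refine ⟨Finset.insert_subset he (hB.1.trans (Finset.erase_subset e E)), hB.2, ?_⟩
        rw [not_not]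
        exact Finset.mem_insert_self e B
      · rw [Finset.erase_insert heB]
  rw [h1, h2] at hsplit
  omega

lemma lhs_rec {C : Set (Finset α × Finset α)} {e : α} (hC : Ax C) (hnl : NotLoop e C)
    {E : Finset α} (he : e ∈ E) :
    (E.powerset.filter (fun A => Acyclic (reorientC A C))).card
      = ((E.erase e).powerset.filter (fun A => Acyclic (reorientC A (delC {e} C)))).card
        + ((E.erase e).powerset.filter (fun A => Acyclic (reorientC A (contrC {e} C)))).card := by
  rw [count_split he]
  rw [Finset.card_filter, Finset.card_filter, Finset.card_filter, Finset.card_filter,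
    ← Finset.sum_add_distrib, ← Finset.sum_add_distrib]
  apply Finset.sum_congr rfl
  intro A hA
  have heA : e ∉ A := fun h =>
    (Finset.mem_erase.mp ((Finset.mem_powerset.mp hA) h)).1 rfl
  exact acy_pointwise hC hnl heA

end Counting

section NBCSide

variable {α : Type} [DecidableEq α] [LinearOrder α]

def NBCc (C : Set (Finset α × Finset α)) (N : Finset α) : Prop :=
  ∀ X ∈ C, ∀ h : (supp X).Nonempty, ¬ (supp X).erase ((supp X).max' h) ⊆ N

variable {C : Set (Finset α × Finset α)} {e : α} {E : Finset α}

lemma nbc_del (hC : Ax C) (hnl : NotLoop e C) (hmin : ∀ f ∈ E, e ≤ f)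
    (hsupp : ∀ X ∈ C, supp X ⊆ E) {N : Finset α} (hN : N ⊆ E.erase e) :
    NBCc C N ↔ NBCc (delC {e} C) N := by
  constructor
  · intro h X hX hne
    exact h X hX.1 hne
  · intro h X hX hne hsub
    by_cases heX : e ∈ supp X
    · obtain ⟨f, hf, hfe⟩ : ∃ f ∈ supp X, f ≠ e := by
        by_contra hc
        push_neg at hc
        exact hnl X hX (Finset.eq_singleton_iff_unique_mem.mpr ⟨heX, fun x hx => hc x hx⟩)
      have hlt : e < (supp X).max' hne :=
        lt_of_lt_of_le (lt_of_le_of_ne (hmin f (hsupp X hX hf)) (Ne.symm hfe))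
          (Finset.le_max' _ f hf)
      have heN : e ∈ N := hsub (Finset.mem_erase.mpr ⟨ne_of_lt hlt, heX⟩)
      exact (Finset.mem_erase.mp (hN heN)).1 rfl
    · exact h X ⟨hX, Finset.disjoint_singleton_right.mpr heX⟩ hne hsub

lemma nbc_contr (hC : Ax C) (hnl : NotLoop e C) (hmin : ∀ f ∈ E, e ≤ f)
    (hsupp : ∀ X ∈ C, supp X ⊆ E) {N : Finset α} (hN : N ⊆ E.erase e) :
    NBCc C (insert e N) ↔ NBCc (contrC {e} C) N := by
  have heN : e ∉ N := fun h => (Finset.mem_erase.mp (hN h)).1 rfl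
  constructor
  · -- forward
    rintro h Z ⟨⟨Y, hY, hne, rfl⟩, -⟩ hDne hsub
    have hD : supp (Y.1 \ ({e} : Finset α), Y.2 \ ({e} : Finset α)) = supp Y \ {e} :=
      supp_contr_pair Y
    have hSne : (supp Y).Nonempty := by
      obtain ⟨a, ha⟩ := hDne
      rw [hD, Finset.mem_sdiff] at ha
      exact ⟨a, ha.1⟩
    set S := supp Y with hSdef
    set mS := S.max' hSne with hmSdef
    have hmSD : mS ∈ supp (Y.1 \ ({e} : Finset α), Y.2 \ ({e} : Finset α)) := by
      rw [hD, Finset.mem_sdiff]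
      refine ⟨Finset.max'_mem S hSne, ?_⟩
      rw [Finset.mem_singleton]
      obtain ⟨f, hf⟩ := hDne
      rw [hD, Finset.mem_sdiff, Finset.mem_singleton] at hf
      have : e < f := lt_of_le_of_ne (hmin f (hsupp Y hY hf.1)) (Ne.symm hf.2)
      have : e < mS := lt_of_lt_of_le this (Finset.le_max' S f hf.1)
      exact (ne_of_lt this).symm
    have hmax_eq : (supp (Y.1 \ ({e} : Finset α), Y.2 \ ({e} : Finset α))).max' hDne = mS := by
      apply le_antisymm
      · apply Finset.max'_le
        intro x hx
        rw [hD, Finset.mem_sdiff] at hx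
        exact Finset.le_max' S x hx.1
      · exact Finset.le_max' _ mS hmSD
    apply h Y hY hSne
    intro a ha
    rw [Finset.mem_erase] at ha
    by_cases hae : a = e
    · exact hae ▸ Finset.mem_insert_self e N
    · apply Finset.mem_insert_of_mem
      have haD : a ∈ supp (Y.1 \ ({e} : Finset α), Y.2 \ ({e} : Finset α)) := by
        rw [hD, Finset.mem_sdiff, Finset.mem_singleton]
        exact ⟨ha.2, hae⟩
      have : a ∈ (supp (Y.1 \ ({e} : Finset α), Y.2 \ ({e} : Finset α))).erase
          ((supp (Y.1 \ ({e} : Finset α), Y.2 \ ({e} : Finset α))).max' hDne) := by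
        rw [Finset.mem_erase, hmax_eq]
        exact ⟨ha.1, haD⟩
      exact hsub this
  · -- backward
    intro h X hX hSne hsub
    set S := supp X with hSdef
    set mS := S.max' hSne with hmSdef
    have hZ₀ : (X.1 \ ({e} : Finset α), X.2 \ ({e} : Finset α)) ∈ contrPre {e} C :=
      ⟨X, hX, Finset.nonempty_iff_ne_empty.mp (supp_of_nonloop hC hnl hX), rfl⟩
    obtain ⟨W, hW, hWsub⟩ := contr_extract (supp (X.1 \ ({e} : Finset α),
      X.2 \ ({e} : Finset α))).card _ hZ₀ rfl
    have hWS : supp W ⊆ S \ {e} := by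
      rw [← supp_contr_pair X]
      exact hWsub
    have hDne : (supp W).Nonempty :=
      Finset.nonempty_iff_ne_empty.mpr (contr_supp_nonempty hW.1)
    apply h W hW hDne
    intro a ha
    rw [Finset.mem_erase] at ha
    have haS : a ∈ S \ {e} := hWS ha.2
    rw [Finset.mem_sdiff, Finset.mem_singleton] at haS
    by_cases hmSW : mS ∈ supp W
    · have hmax_eq : (supp W).max' hDne = mS := by
        apply le_antisymm
        · apply Finset.max'_le
          intro x hx
          have := hWS hx
          rw [Finset.mem_sdiff] at this
          exact Finset.le_max' S x this.1
        · exact Finset.le_max' _ mS hmSW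
      have : a ∈ S.erase mS := Finset.mem_erase.mpr ⟨by rw [← hmax_eq]; exact ha.1, haS.1⟩
      have := hsub this
      rcases Finset.mem_insert.mp this with h' | h'
      · exact absurd h' haS.2
      · exact h'
    · have hamS : a ≠ mS := fun hc => hmSW (hc ▸ ha.2)
      have : a ∈ S.erase mS := Finset.mem_erase.mpr ⟨hamS, haS.1⟩
      have := hsub this
      rcases Finset.mem_insert.mp this with h' | h'
      · exact absurd h' haS.2
      · exact h'

lemma rhs_rec (hC : Ax C) (hnl : NotLoop e C) (he : e ∈ E) (hmin : ∀ f ∈ E, e ≤ f)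
    (hsupp : ∀ X ∈ C, supp X ⊆ E) :
    (E.powerset.filter (fun N => NBCc C N)).card
      = ((E.erase e).powerset.filter (fun N => NBCc (delC {e} C) N)).card
        + ((E.erase e).powerset.filter (fun N => NBCc (contrC {e} C) N)).card := by
  have e1 : ((E.erase e).powerset.filter (fun N => NBCc C N))
      = ((E.erase e).powerset.filter (fun N => NBCc (delC {e} C) N)) :=
    Finset.filter_congr (fun N hN =>
      nbc_del hC hnl hmin hsupp (Finset.mem_powerset.mp hN))
  have e2 : ((E.erase e).powerset.filter (fun N => NBCc C (insert e N)))
      = ((E.erase e).powerset.filter (fun N => NBCc (contrC {e} C) N)) :=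
    Finset.filter_congr (fun N hN =>
      nbc_contr hC hnl hmin hsupp (Finset.mem_powerset.mp hN))
  rw [count_split he, e1, e2]

end NBCSide

section Assembly

variable {α : Type} [DecidableEq α]

lemma supp_del_subset {C : Set (Finset α × Finset α)} {e : α} {E : Finset α}
    (hsupp : ∀ X ∈ C, supp X ⊆ E) :
    ∀ X ∈ delC {e} C, supp X ⊆ E.erase e := by
  intro X hX
  rw [Finset.subset_erase]
  exact ⟨hsupp X hX.1, Finset.disjoint_singleton_right.mp hX.2⟩

lemma supp_contr_subset {C : Set (Finset α × Finset α)} {e : α} {E : Finset α}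
    (hsupp : ∀ X ∈ C, supp X ⊆ E) :
    ∀ Z ∈ contrC {e} C, supp Z ⊆ E.erase e := by
  rintro Z ⟨⟨Y, hY, hne, rfl⟩, -⟩
  rw [supp_contr_pair, Finset.erase_eq]
  exact Finset.sdiff_subset_sdiff (hsupp Y hY) (le_refl _)

lemma loop_not_acyclic {C : Set (Finset α × Finset α)} {e : α} (hC : Ax C)
    {X₀ : Finset α × Finset α} (hX₀ : X₀ ∈ C) (hs : supp X₀ = ({e} : Finset α))
    (A : Finset α) : ¬ Acyclic (reorientC A C) := by
  rw [acyclic_reorientC_iff]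
  push_neg
  have h1 : ∀ a ∈ X₀.1, a = e := fun a ha =>
    Finset.mem_singleton.mp (hs ▸ mem_supp.mpr (Or.inl ha))
  have h2 : ∀ a ∈ X₀.2, a = e := fun a ha =>
    Finset.mem_singleton.mp (hs ▸ mem_supp.mpr (Or.inr ha))
  have hdisj := hC.disj X₀ hX₀
  have hesupp : e ∈ supp X₀ := by rw [hs]; exact Finset.mem_singleton_self e
  by_cases heA : e ∈ A
  · by_cases he1 : e ∈ X₀.1
    · refine ⟨(X₀.2, X₀.1), hC.neg_mem X₀ hX₀, ?_⟩
      rw [Finset.eq_empty_iff_forall_notMem]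
      intro a ha
      rcases mem_rneg.mp ha with ⟨ha', hA⟩ | ⟨ha', hA⟩
      · exact hA ((h1 a ha') ▸ heA)
      · exact Finset.disjoint_left.mp hdisj ((h2 a ha') ▸ he1) ha'
    · refine ⟨X₀, hX₀, ?_⟩
      rw [Finset.eq_empty_iff_forall_notMem]
      intro a ha
      rcases mem_rneg.mp ha with ⟨ha', hA⟩ | ⟨ha', hA⟩
      · exact hA ((h2 a ha') ▸ heA)
      · exact he1 ((h1 a ha') ▸ ha')
  · by_cases he1 : e ∈ X₀.1
    · refine ⟨X₀, hX₀, ?_⟩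
      rw [Finset.eq_empty_iff_forall_notMem]
      intro a ha
      rcases mem_rneg.mp ha with ⟨ha', hA⟩ | ⟨ha', hA⟩
      · exact Finset.disjoint_left.mp hdisj ((h2 a ha') ▸ he1) ha'
      · exact heA ((h1 a ha') ▸ hA)
    · refine ⟨(X₀.2, X₀.1), hC.neg_mem X₀ hX₀, ?_⟩
      rw [Finset.eq_empty_iff_forall_notMem]
      intro a ha
      rcases mem_rneg.mp ha with ⟨ha', hA⟩ | ⟨ha', hA⟩
      · exact he1 ((h1 a ha') ▸ ha')
      · exact heA ((h2 a ha') ▸ hA)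

lemma loop_not_nbc {α' : Type} [DecidableEq α'] [LinearOrder α']
    {C : Set (Finset α' × Finset α')} {e : α'}
    {X₀ : Finset α' × Finset α'} (hX₀ : X₀ ∈ C) (hs : supp X₀ = ({e} : Finset α'))
    (N : Finset α') : ¬ NBCc C N := by
  intro h
  have hne : (supp X₀).Nonempty := by rw [hs]; exact ⟨e, Finset.mem_singleton_self e⟩
  apply h X₀ hX₀ hne
  have hall : ∀ a ∈ supp X₀, a = e := fun a ha => Finset.mem_singleton.mp (hs ▸ ha)
  have hmax : (supp X₀).max' hne = e := hall _ (Finset.max'_mem (supp X₀) hne)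
  intro a ha
  rw [Finset.mem_erase, hmax, hs, Finset.mem_singleton] at ha
  exact absurd ha.2 ha.1

lemma main_count {α' : Type} [DecidableEq α'] [LinearOrder α'] :
    ∀ (n : ℕ) (E : Finset α') (C : Set (Finset α' × Finset α')), E.card = n → Ax C →
      (∀ X ∈ C, supp X ⊆ E) →
      (E.powerset.filter (fun A => Acyclic (reorientC A C))).card
        = (E.powerset.filter (fun N => NBCc C N)).card := by
  intro n
  induction n using Nat.strong_induction_on with
  | _ n IH =>
    intro E C hcard hC hsupp
    rcases Finset.eq_empty_or_nonempty E with rfl | hEne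
    · -- base case : C is empty
      have hCe : ∀ X, X ∉ C := by
        intro X hX
        obtain ⟨a, ha⟩ := hC.supp_nonempty hX
        exact absurd (hsupp X hX ha) (Finset.notMem_empty a)
      rw [Finset.filter_true_of_mem, Finset.filter_true_of_mem]
      · intro N _
        intro X hX
        exact absurd hX (hCe X)
      · intro A _
        rintro Y ⟨X, hX, rfl⟩
        exact absurd hX (hCe X)
    · set e := E.min' hEne with hedef
      have he : e ∈ E := Finset.min'_mem E hEne
      have hmin : ∀ f ∈ E, e ≤ f := fun f hf => Finset.min'_le E f hf
      by_cases hloop : ∃ X₀ ∈ C, supp X₀ = ({e} : Finset α')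
      · obtain ⟨X₀, hX₀, hs⟩ := hloop
        rw [Finset.filter_false_of_mem, Finset.filter_false_of_mem, Finset.card_empty]
        · intro N _
          exact loop_not_nbc hX₀ hs N
        · intro A _
          exact loop_not_acyclic hC hX₀ hs A
      · have hnl : NotLoop e C := fun X hX h => hloop ⟨X, hX, h⟩
        have hlt : (E.erase e).card < n := hcard ▸ Finset.card_erase_lt_of_mem he
        rw [lhs_rec hC hnl he, rhs_rec hC hnl he hmin hsupp,
          IH _ hlt _ _ rfl (ax_del hC) (supp_del_subset hsupp),
          IH _ hlt _ _ rfl (ax_contr hC hnl) (supp_contr_subset hsupp)]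

end Assembly

/-- **Las Vergnas' theorem.** The number of subsets `A` of the ground set for which
the reorientation `₋ₐM` is acyclic equals the number of NBC subsets of the
underlying matroid of `M`. -/
theorem stmt_0 {α : Type} [Fintype α] [DecidableEq α] [LinearOrder α] (M : OM α) :
    {A : Finset α | Acyclic (reorientC A M.C)}.ncard
      = {N : Finset α | IsNBC M N}.ncard := by
  have hL : {A : Finset α | Acyclic (reorientC A M.C)}
      = ↑(Finset.univ.filter (fun A : Finset α => Acyclic (reorientC A M.C))) := by
    ext A; simp
  have hR : {N : Finset α | IsNBC M N}
      = ↑(Finset.univ.filter (fun N : Finset α => NBCc M.C N)) := by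
    ext N
    simp only [Set.mem_setOf_eq, Finset.coe_filter, Finset.mem_univ, true_and]
    exact Iff.rfl
  rw [hL, hR, Set.ncard_coe_finset, Set.ncard_coe_finset]
  have hax : Ax M.C := ⟨M.disj, M.not_empty_mem, M.neg_mem, M.incomp, M.elimAx⟩
  have hmain := main_count (Finset.univ : Finset α).card Finset.univ M.C rfl hax
    (fun X _ => Finset.subset_univ _)
  rwa [Finset.powerset_univ] at hmain
end

section
/- For each 1 ≤ k ≤ m, the map ψ_k : 𝒩_{k−1} → 𝒩_k is injective. -/
open Finset

/-- `E_k = {e₁, …, e_k}`: the first `k` elements of the ground set `Fin m`. -/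
def Ek (m k : ℕ) : Finset (Fin m) := Finset.filter (fun i => (i : ℕ) < k) Finset.univ

/-- `M` is loopless: no signed circuit has support of size one. -/
def Loopless {m : ℕ} (M : OM (Fin m)) : Prop := ∀ X ∈ M.C, (supp X).card ≠ 1

/-- `M(N, A) = ₋ₐ(M ∖ (E_k − N) / N)`. -/
def MNA {m : ℕ} (M : OM (Fin m)) (k : ℕ) (N A : Finset (Fin m)) :
    Set (Finset (Fin m) × Finset (Fin m)) :=
  reorientC A (contrC N (delC (Ek m k \ N) M.C))

/-- The set `𝒩_k` of pairs `(N, A)` with `N ⊆ E_k` an NBC subset of the underlying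
matroid, `A ⊆ E − E_k`, and `M(N, A)` acyclic. -/
def NFam {m : ℕ} (M : OM (Fin m)) (k : ℕ) : Set (Finset (Fin m) × Finset (Fin m)) :=
  {p | p.1 ⊆ Ek m k ∧ IsNBC M p.1 ∧ p.2 ⊆ (Ek m k)ᶜ ∧ Acyclic (MNA M k p.1 p.2)}

open scoped Classical in
/-- The map `ψ_k` (where `j = k - 1` and `e = e_k`), defined on `𝒩_{k-1}`:
`ψ_k(N, A) = (N ∪ {e_k}, A)` if `e_k ∉ A` and `₋{e_k}M(N, A)` is acyclic,
`ψ_k(N, A) = (N, A)` if `e_k ∉ A` and `₋{e_k}M(N, A)` is not acyclic, and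
`ψ_k(N, A) = (N, A − {e_k})` if `e_k ∈ A`. -/
noncomputable def psi {m : ℕ} (M : OM (Fin m)) (j : ℕ) (e : Fin m)
    (p : Finset (Fin m) × Finset (Fin m)) : Finset (Fin m) × Finset (Fin m) :=
  if e ∈ p.2 then (p.1, p.2.erase e)
  else if Acyclic (reorientC {e} (MNA M j p.1 p.2)) then (insert e p.1, p.2)
  else p

open scoped symmDiff

lemma reorient_reorient {α : Type} [DecidableEq α] (A B : Finset α) (X : Finset α × Finset α) :
    reorient A (reorient B X) = reorient (A ∆ B) X := by
  unfold reorient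
  refine Prod.ext ?_ ?_ <;>
  · ext a
    by_cases haA : a ∈ A <;> by_cases haB : a ∈ B <;> simp [Finset.mem_symmDiff, haA, haB]

lemma reorientC_reorientC {α : Type} [DecidableEq α] (A B : Finset α)
    (C : Set (Finset α × Finset α)) :
    reorientC A (reorientC B C) = reorientC (A ∆ B) C := by
  unfold reorientC
  rw [Set.image_image]
  exact Set.image_congr fun X _ => reorient_reorient A B X

lemma singleton_symmDiff_erase {α : Type} [DecidableEq α] {e : α} {A : Finset α} (he : e ∈ A) :
    {e} ∆ A.erase e = A := by
  rw [(Finset.disjoint_singleton_left.2 (Finset.notMem_erase e A)).symmDiff_eq_sup,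
    Finset.sup_eq_union, ← Finset.insert_eq, Finset.insert_erase he]

lemma reorientC_MNA {m : ℕ} (M : OM (Fin m)) (k : ℕ) (N A B : Finset (Fin m)) :
    reorientC B (MNA M k N A) = MNA M k N (B ∆ A) :=
  reorientC_reorientC B A _

open scoped Classical in
noncomputable def psiInv {m : ℕ} (M : OM (Fin m)) (j : ℕ) (e : Fin m)
    (p : Finset (Fin m) × Finset (Fin m)) : Finset (Fin m) × Finset (Fin m) :=
  if e ∈ p.1 then (p.1.erase e, p.2)
  else if Acyclic (reorientC {e} (MNA M j p.1 p.2)) then (p.1, insert e p.2)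
  else p

/-- The three branches of `psi` land in disjoint regions: `e ∈ N` after the second one,
and after the first one `₋{e}` undoes the removal of `e` from `A`, giving back the acyclic
`M(N, A)`, which the third branch excludes. -/
lemma psi_leftInvOn {m : ℕ} (M : OM (Fin m)) (j : ℕ) (e : Fin m) (he : e ∉ Ek m j) :
    Set.LeftInvOn (psiInv M j e) (psi M j e) (NFam M j) := by
  rintro ⟨N, A⟩ ⟨hN, -, -, hacyc⟩
  have heN : e ∉ N := fun h => he (hN h)
  by_cases heA : e ∈ A
  · have hback : Acyclic (reorientC {e} (MNA M j N (A.erase e))) := by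
      rwa [reorientC_MNA, singleton_symmDiff_erase heA]
    simp [psi, psiInv, heA, heN, hback, Finset.insert_erase heA]
  · by_cases hflip : Acyclic (reorientC {e} (MNA M j N A)) <;>
      simp [psi, psiInv, heA, heN, hflip]

/-- **Injectivity of `ψ_k`** on `𝒩_{k−1}`. -/
theorem stmt_4 (m : ℕ) (M : OM (Fin m))
    (k : ℕ) (hk1 : 1 ≤ k) (hkm : k ≤ m) :
    Set.InjOn (psi M (k - 1) ⟨k - 1, by omega⟩) (NFam M (k - 1)) :=
  (psi_leftInvOn M (k - 1) _ (by simp [Ek])).injOn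
end
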